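/- Any field isomorphism between two fields, each complete with respect to a discrete valuation, restricts to a ring isomorphism between their valuation rings, and is automatically a homeomorphism for the valuation topologies. -/

import Mathlib

/-!
Put `w := v' ∘ φ`, a second normalized discrete valuation on `K`. Equivalent valuations define
the same topology, so it suffices that `v` and `w` have the same valuation ring.

Both are henselian: in a complete field Newton's iteration makes every `u` with `w (u - 1) < 1`
an `ℓ`-th power, for any natural `ℓ` that is a `w`-unit (one of `2`, `3` is). If some `y` had
`w y < 1 < v y`, pick `π` with `v π = exp 1`; for large `N` the element `1 + y ^ (ℓ N) π` is
`w`-close to `1`, hence an `ℓ`-th power, yet its `v`-value `exp (ℓ N log (v y) + 1)` is not an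
`ℓ`-th power. So the maximal ideal of `w` lies in the valuation ring of `v`, and by the
archimedean property of `ℤ` so does the valuation ring of `w`. Symmetrically, the rings agree.
-/

open Filter Topology Finset
open scoped WithZero

namespace Valuation

section Ring

variable {R Γ₀ : Type*} [Ring R] [LinearOrderedCommMonoidWithZero Γ₀] (v : Valuation R Γ₀)

theorem map_natCast_le_one (n : ℕ) : v (n : R) ≤ 1 := by
  induction n with
  | zero => simp
  | succ n ih =>
    rw [Nat.cast_succ]
    exact (v.map_add _ _).trans (max_le ih v.map_one.le)

theorem exists_natCast_eq_one : ∃ ℓ : ℕ, 1 < ℓ ∧ v (ℓ : R) = 1 := by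
  by_cases h2 : v ((2 : ℕ) : R) = 1
  · exact ⟨2, one_lt_two, h2⟩
  · have h3 : ((3 : ℕ) : R) = 1 + (2 : ℕ) := by norm_num
    refine ⟨3, by norm_num, ?_⟩
    rw [h3]
    exact v.map_one_add_of_lt ((v.map_natCast_le_one 2).lt_of_ne h2)

variable {v} {t : Γ₀} {x y : R}

theorem map_mul_sub_one_le (ht : t ≤ 1) (hx : v (x - 1) ≤ t) (hy : v (y - 1) ≤ t) :
    v (x * y - 1) ≤ t := by
  have hx1 : v x ≤ 1 := by
    simpa using (v.map_add (x - 1) 1).trans (max_le (hx.trans ht) v.map_one.le)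
  calc v (x * y - 1) = v (x * (y - 1) + (x - 1)) := by noncomm_ring
    _ ≤ t := (v.map_add _ _).trans
      (max_le ((v.map_mul _ _).trans_le (mul_le_of_le_one_of_le hx1 hy)) hx)

theorem map_pow_sub_one_le (ht : t ≤ 1) (hx : v (x - 1) ≤ t) (n : ℕ) :
    v (x ^ n - 1) ≤ t := by
  induction n with
  | zero => simp
  | succ n ih => simpa [pow_succ] using map_mul_sub_one_le ht ih hx

end Ring

theorem map_natCast_sub_geom_sum₂_le {R Γ₀ : Type*} [CommRing R]
    [LinearOrderedCommMonoidWithZero Γ₀] {v : Valuation R Γ₀} {t : Γ₀} {x y : R}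
    (ht : t ≤ 1) (hx : v (x - 1) ≤ t) (hy : v (y - 1) ≤ t) (n : ℕ) :
    v (n - ∑ i ∈ range n, x ^ i * y ^ (n - 1 - i)) ≤ t := by
  have hsum : (n : R) - ∑ i ∈ range n, x ^ i * y ^ (n - 1 - i) =
      ∑ i ∈ range n, (1 - x ^ i * y ^ (n - 1 - i)) := by
    simp [sum_sub_distrib]
  rw [hsum]
  refine v.map_sum_le fun i _ => ?_
  rw [v.map_sub_swap]
  exact map_mul_sub_one_le ht (map_pow_sub_one_le ht hx i) (map_pow_sub_one_le ht hy _)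

end Valuation

/-- Newton's step for `X ^ ℓ - u` with the derivative frozen at its value `ℓ` at the starting
point `1`; it converges linearly. -/
def newtonRootStep {L : Type*} [Field L] (ℓ : ℕ) (u y : L) : L := y - (y ^ ℓ - u) / ℓ

namespace Valuation

variable {L Γ₀ : Type*} [Field L] [LinearOrderedCommGroupWithZero Γ₀] {v : Valuation L Γ₀}
  {ℓ : ℕ} {u y : L}

theorem map_newtonRootStep_sub (hℓ : v (ℓ : L) = 1) :
    v (newtonRootStep ℓ u y - y) = v (y ^ ℓ - u) := by
  simp [newtonRootStep, hℓ]

theorem map_newtonRootStep_pow_sub_le (hℓ : v (ℓ : L) = 1) {t : Γ₀} (ht : t ≤ 1)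
    (hy : v (y - 1) ≤ t) (hy' : v (newtonRootStep ℓ u y - 1) ≤ t) :
    v (newtonRootStep ℓ u y ^ ℓ - u) ≤ t * v (y ^ ℓ - u) := by
  set y' := newtonRootStep ℓ u y
  set S := ∑ i ∈ range ℓ, y' ^ i * y ^ (ℓ - 1 - i)
  have hℓ0 : (ℓ : L) ≠ 0 := fun h => by simp [h] at hℓ
  have hS : y' ^ ℓ - y ^ ℓ = S * (y' - y) := (geom_sum₂_mul y' y ℓ).symm
  have hstep : y' - y = -(y ^ ℓ - u) / ℓ := by simp only [y', newtonRootStep]; ring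
  have key : y' ^ ℓ - u = (ℓ - S) / ℓ * (y ^ ℓ - u) := by
    rw [show y' ^ ℓ - u = (y ^ ℓ - u) + (y' ^ ℓ - y ^ ℓ) by ring, hS, hstep]
    field_simp
    ring
  rw [key, map_mul, map_div₀, hℓ, div_one]
  exact mul_le_mul_left (map_natCast_sub_geom_sum₂_le ht hy' hy ℓ) _

end Valuation

namespace Valued

instance toNonarchimedeanRing {R Γ₀ : Type*} [Ring R] [LinearOrderedCommGroupWithZero Γ₀]
    [Valued R Γ₀] : NonarchimedeanRing R := by
  convert (Valued.v : Valuation R Γ₀).subgroups_basis.nonarchimedean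
  exact congrArg (@UniformSpace.toTopologicalSpace R) (Valued.toUniformSpace_eq R Γ₀)

theorem tendsto_nhds_zero_of_le_pow {R Γ₀ : Type*} [Ring R]
    [LinearOrderedCommGroupWithZero Γ₀] [MulArchimedean Γ₀] [Valued R Γ₀] {f : ℕ → R}
    {t : Γ₀} (ht : t < 1) (hf : ∀ n, Valued.v (f n) ≤ t ^ n) : Tendsto f atTop (𝓝 0) := by
  rw [(Valued.hasBasis_nhds_zero R Γ₀).tendsto_right_iff]
  intro γ _
  have hγ : MonoidWithZeroHom.ValueGroup₀.embedding γ.1 ≠ 0 := by simp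
  obtain ⟨N, hN⟩ := exists_pow_lt₀ ht (Units.mk0 _ hγ)
  filter_upwards [eventually_ge_atTop N] with n hn
  rw [Valuation.restrict_lt_iff_lt_embedding]
  exact (hf n).trans_lt ((pow_le_pow_right_of_le_one' ht.le hn).trans_lt hN)

theorem exists_pow_eq_of_map_sub_one_lt_one {L Γ₀ : Type*} [Field L]
    [LinearOrderedCommGroupWithZero Γ₀] [MulArchimedean Γ₀] [Valued L Γ₀] [CompleteSpace L]
    {ℓ : ℕ} (hℓ : Valued.v (ℓ : L) = 1) {u : L} (hu : Valued.v (u - 1) < 1) :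
    ∃ r : L, r ^ ℓ = u := by
  set t := Valued.v (u - 1)
  set Y : ℕ → L := fun n => (newtonRootStep ℓ u)^[n] 1
  have hYsucc (n : ℕ) : Y (n + 1) = newtonRootStep ℓ u (Y n) := Function.iterate_succ_apply' ..
  have hY (n : ℕ) : Valued.v (Y n - 1) ≤ t ∧ Valued.v (Y n ^ ℓ - u) ≤ t ^ (n + 1) := by
    induction n with
    | zero => simp [Y, t, Valuation.map_sub_swap]
    | succ n ih =>
      have hsub : Valued.v (Y (n + 1) - 1) ≤ t := by
        rw [← sub_add_sub_cancel _ (Y n), hYsucc]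
        refine (Valued.v.map_add _ _).trans (max_le ?_ ih.1)
        rw [Valuation.map_newtonRootStep_sub hℓ]
        exact ih.2.trans (pow_le_of_le_one zero_le hu.le n.succ_ne_zero)
      refine ⟨hsub, ?_⟩
      calc Valued.v (Y (n + 1) ^ ℓ - u) ≤ t * Valued.v (Y n ^ ℓ - u) := by
            rw [hYsucc] at hsub ⊢
            exact Valuation.map_newtonRootStep_pow_sub_le hℓ hu.le ih.1 hsub
        _ ≤ t ^ (n + 1 + 1) := by rw [pow_succ']; exact mul_le_mul_right ih.2 t
  have hle (n : ℕ) : t ^ (n + 1) ≤ t ^ n := pow_le_pow_right_of_le_one' hu.le n.le_succ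
  have hdiff (n : ℕ) : Valued.v (Y (n + 1) - Y n) ≤ t ^ n := by
    rw [hYsucc, Valuation.map_newtonRootStep_sub hℓ]
    exact (hY n).2.trans (hle n)
  obtain ⟨r, hr⟩ := cauchySeq_tendsto_of_complete
    (NonarchimedeanAddGroup.cauchySeq_of_tendsto_sub_nhds_zero
      (tendsto_nhds_zero_of_le_pow hu hdiff))
  have hpow : Tendsto (fun n => Y n ^ ℓ - u) atTop (𝓝 0) :=
    tendsto_nhds_zero_of_le_pow hu fun n => (hY n).2.trans (hle n)
  exact ⟨r, sub_eq_zero.mp (tendsto_nhds_unique ((hr.pow ℓ).sub_const u) hpow)⟩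

theorem continuous_of_map_le_one_iff {K K' Γ Γ' : Type*} [Field K] [Field K']
    [LinearOrderedCommGroupWithZero Γ] [LinearOrderedCommGroupWithZero Γ'] [Valued K Γ]
    [Valued K' Γ'] (φ : K ≃+* K')
    (h : ∀ x, Valued.v x ≤ 1 ↔ Valued.v (φ x) ≤ 1) : Continuous φ := by
  have hequiv : (Valued.v : Valuation K Γ).IsEquiv (Valued.v.comap (φ : K →+* K')) :=
    Valuation.isEquiv_of_val_le_one h
  refine continuous_of_continuousAt_zero φ ?_
  rw [ContinuousAt, map_zero,
    (Valued.hasBasis_nhds_zero K Γ).tendsto_iff (Valued.hasBasis_nhds_zero K' Γ')]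
  intro γ _
  obtain ⟨y, hy⟩ := MonoidWithZeroHom.ValueGroup₀.restrict₀_surjective _ γ.1
  rw [← Valuation.restrict_def] at hy
  have hy0 : Valued.v.restrict (φ.symm y) ≠ 0 := by
    simpa [← hy, Valuation.restrict_def] using γ.ne_zero
  refine ⟨Units.mk0 _ hy0, trivial, fun x hx => ?_⟩
  simp only [Set.mem_ofPred_eq, Units.val_mk0, Valuation.restrict_lt_iff] at hx ⊢
  rw [← hy, Valuation.restrict_lt_iff]
  simpa using hequiv.lt_iff_lt.mp hx

end Valued

namespace Valuation

variable {K : Type*} [Field K]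

theorem le_one_of_le_one_of_forall_lt_one_imp {Γ₀ : Type*} [LinearOrderedCommGroupWithZero Γ₀]
    [MulArchimedean Γ₀] {v w : Valuation K Γ₀} (hw : w.IsNontrivial)
    (h : ∀ y, w y < 1 → v y ≤ 1) {x : K} (hx : w x ≤ 1) : v x ≤ 1 := by
  by_contra! hvx
  obtain ⟨t, ht0, ht⟩ := (isNontrivial_iff_exists_lt_one w).mp hw
  obtain ⟨k, hk⟩ :=
    exists_pow_lt₀ (inv_lt_one_of_one_lt₀ hvx) (Units.mk0 (v t) (by simpa using ht0))
  have hwk : w (x ^ k * t) < 1 := by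
    rw [map_mul, map_pow]
    exact mul_lt_one_of_nonneg_of_lt_one_right (pow_le_one' hx k) zero_le ht
  have hvk : 1 < v (x ^ k * t) := by
    rw [map_mul, map_pow, ← inv_lt_iff_one_lt_mul₀' (pow_pos (zero_lt_one.trans hvx) k),
      ← inv_pow]
    exact hk
  exact (h _ hwk).not_gt hvk

theorem le_one_of_lt_one_of_forall_exists_pow_eq {v w : Valuation K ℤᵐ⁰}
    (hv : Function.Surjective v) {ℓ : ℕ} (hℓ : 1 < ℓ)
    (hroot : ∀ u, w (u - 1) < 1 → ∃ r, r ^ ℓ = u) {y : K} (hy : w y < 1) : v y ≤ 1 := by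
  by_contra! hvy
  obtain ⟨π, hπ⟩ := hv (WithZero.exp 1)
  have hπ0 : w π ≠ 0 := by
    rw [Valuation.ne_zero_iff, ← v.ne_zero_iff, hπ]
    exact WithZero.exp_ne_zero
  obtain ⟨N, hN⟩ := exists_pow_lt₀ (pow_lt_one₀ zero_le hy (by omega : ℓ ≠ 0))
    (Units.mk0 (w π)⁻¹ (inv_ne_zero hπ0))
  set s := y ^ (ℓ * N) * π
  have hws : w s < 1 := by
    rw [map_mul, map_pow, pow_mul]
    exact (lt_mul_inv_iff₀ (zero_lt_iff.mpr hπ0)).mp (by simpa using hN)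
  have hvs : 1 < v s := by
    rw [map_mul, map_pow, hπ]
    exact (WithZero.exp_lt_exp.mpr one_pos).trans_le
      (le_mul_of_one_le_left' (one_le_pow_of_one_le' hvy.le _))
  obtain ⟨r, hr⟩ := hroot (1 + s) (by simpa using hws)
  have hvr : v r ^ ℓ = v y ^ (ℓ * N) * WithZero.exp 1 := by
    rw [← map_pow, hr, v.map_add_eq_of_lt_right (by simpa using hvs), map_mul, map_pow, hπ]
  have hlog : ℓ * WithZero.log (v r) = ℓ * N * WithZero.log (v y) + 1 := by
    have h := congrArg WithZero.log hvr
    rwa [WithZero.log_pow, WithZero.log_mul (pow_ne_zero _ (zero_lt_one.trans hvy).ne')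
      WithZero.exp_ne_zero, WithZero.log_pow, WithZero.log_exp, nsmul_eq_mul, nsmul_eq_mul,
      Nat.cast_mul] at h
  have hdvd : (ℓ : ℤ) ∣ 1 :=
    ⟨WithZero.log (v r) - N * WithZero.log (v y), by linear_combination -hlog⟩
  have := Int.le_of_dvd one_pos hdvd
  omega

theorem isNontrivial_of_surjective {v : Valuation K ℤᵐ⁰} (hv : Function.Surjective v) :
    v.IsNontrivial :=
  let ⟨x, hx⟩ := hv (WithZero.exp 1)
  ⟨x, by simp [hx]⟩

theorem isEquiv_of_forall_exists_pow_eq {v w : Valuation K ℤᵐ⁰} (hv : Function.Surjective v)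
    (hw : Function.Surjective w) {ℓ ℓ' : ℕ} (hℓ : 1 < ℓ) (hℓ' : 1 < ℓ')
    (hvroot : ∀ u, v (u - 1) < 1 → ∃ r, r ^ ℓ = u)
    (hwroot : ∀ u, w (u - 1) < 1 → ∃ r, r ^ ℓ' = u) : v.IsEquiv w :=
  isEquiv_of_val_le_one fun _ =>
    ⟨le_one_of_le_one_of_forall_lt_one_imp (isNontrivial_of_surjective hv)
        fun _ => le_one_of_lt_one_of_forall_exists_pow_eq hw hℓ hvroot,
      le_one_of_le_one_of_forall_lt_one_imp (isNontrivial_of_surjective hw)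
        fun _ => le_one_of_lt_one_of_forall_exists_pow_eq hv hℓ' hwroot⟩

end Valuation

/-- Any field isomorphism between two fields, each complete with respect to a discrete
valuation, restricts to a ring isomorphism between their valuation rings (i.e. it maps the
valuation ring onto the valuation ring), and it is automatically a homeomorphism for the
valuation topologies. -/
theorem field_iso_of_complete_discrete_valuation_fields
    (K K' : Type*) [Field K] [Field K']
    [hvK : Valued K (WithZero (Multiplicative ℤ))] [CompleteSpace K]
    [hvK' : Valued K' (WithZero (Multiplicative ℤ))] [CompleteSpace K']
    (hK_surj : Function.Surjective hvK.v)
    (hK'_surj : Function.Surjective hvK'.v)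
    (φ : K ≃+* K') :
    (∀ x : K, hvK.v x ≤ 1 ↔ hvK'.v (φ x) ≤ 1) ∧
      Continuous (φ : K → K') ∧ Continuous (φ.symm : K' → K) := by
  obtain ⟨ℓ, hℓ, hvℓ⟩ := hvK.v.exists_natCast_eq_one
  obtain ⟨ℓ', hℓ', hvℓ'⟩ := hvK'.v.exists_natCast_eq_one
  have hroot' (u : K) (hu : hvK'.v (φ u - 1) < 1) : ∃ r, r ^ ℓ' = u := by
    obtain ⟨r, hr⟩ := Valued.exists_pow_eq_of_map_sub_one_lt_one hvℓ' hu
    exact ⟨φ.symm r, by rw [← map_pow, hr, φ.symm_apply_apply]⟩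
  have hequiv : hvK.v.IsEquiv (hvK'.v.comap (φ : K →+* K')) :=
    Valuation.isEquiv_of_forall_exists_pow_eq hK_surj (hK'_surj.comp φ.surjective) hℓ hℓ'
      (fun _ => Valued.exists_pow_eq_of_map_sub_one_lt_one hvℓ) (by simpa using hroot')
  have hle (x : K) : hvK.v x ≤ 1 ↔ hvK'.v (φ x) ≤ 1 := hequiv.le_one_iff_le_one
  exact ⟨hle, Valued.continuous_of_map_le_one_iff φ hle,
    Valued.continuous_of_map_le_one_iff φ.symm fun y => by simpa using (hle (φ.symm y)).symm⟩
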